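/- arXiv:1711.10013 — 4 statements merged into one kernel-verified Lean document; each statement's English description precedes it below -/
import Mathlib

section
/- Let a, b, λ, t > 0 and let θ be a nonzero real number. Let Ψ(x) = -a(√(b² - 2ix) - b) for real x, where √ denotes the principal branch of the complex square root. Define T₁ = √(-2θ - iλb²), T₂ = √(2θ(1 - e^{-λt}) + iλb²), and G = Log( e^{-λt} (T₁ + i√(iλ) b)² / (T₁ + i T₂)² ), where Log is the principal branch of the complex logarithm. Then ∫₀^{λt} Ψ( θ λ⁻¹ (1 - e^{-λt+s}) ) ds = -(2a/√(iλ)) [ -T₂ + √(iλ) b + (i/2) T₁ G ] + λ a b t. -/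
/-!
Along the path `x = θλ⁻¹(1 - e^{s-λt})` the radicand `w = b² - 2ix` of `Ψ` satisfies
`w' = w - A` with `A = b² - 2iθ/λ`. Hence `s ↦ 2√w + √A log((√w - √A)/(√w + √A))`, whose
`w`-derivative is `√w / (w - A)`, is an antiderivative of `√w(s)`.

Every radicand involved has real part `b² > 0`, so all square roots lie in the sector
`|arg| < π/4`. This keeps the Möbius quotient `(√w - √A)/(√w + √A)` in the open half-plane
given by the sign of `θ`. So the principal logarithm is holomorphic along the path, and the
two endpoint logarithms combine into the single logarithm `G`. What remains is
`T₁ = -i√(iλ)√A` and `T₂ = √(iλ)√w(0)`, both checked by squaring inside the right half-plane.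
-/

namespace Complex

open Real ComplexConjugate

theorem cpow_half_sq (w : ℂ) : (w ^ (1 / 2 : ℂ)) ^ 2 = w := by
  simp [one_div]

theorem sq_cpow_half {u : ℂ} (hu : 0 < u.re) : (u ^ 2) ^ (1 / 2 : ℂ) = u := by
  have harg : |u.arg| < π / 2 := abs_arg_lt_pi_div_two_iff.mpr (Or.inl hu)
  rw [abs_lt] at harg
  simpa [one_div] using pow_cpow_ofNat_inv (n := 2) (by linarith) harg.2.le

theorem cpow_half_eq_of_sq_eq {u w : ℂ} (hu : 0 < u.re) (h : u ^ 2 = w) : w ^ (1 / 2 : ℂ) = u :=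
  h ▸ sq_cpow_half hu

theorem re_cpow_half_pos {w : ℂ} (hw : w ∈ slitPlane) : 0 < (w ^ (1 / 2 : ℂ)).re := by
  obtain ⟨hπ, hw0⟩ := mem_slitPlane_iff_arg.mp hw
  have hlt : w.arg < π := lt_of_le_of_ne (arg_le_pi w) hπ
  have him : (log w * (1 / 2)).im = w.arg / 2 := by simp [mul_im, log_im, div_eq_mul_inv]
  rw [cpow_def_of_ne_zero hw0, exp_re, him]
  exact mul_pos (Real.exp_pos _)
    (Real.cos_pos_of_mem_Ioo ⟨by linarith [neg_pi_lt_arg w], by linarith⟩)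

theorem abs_im_cpow_half_lt_re {w : ℂ} (hw : 0 < w.re) :
    |(w ^ (1 / 2 : ℂ)).im| < (w ^ (1 / 2 : ℂ)).re := by
  set z := w ^ (1 / 2 : ℂ)
  have hz : 0 < z.re := re_cpow_half_pos (Or.inl hw)
  have hsq : w.re = z.re ^ 2 - z.im ^ 2 := by rw [← cpow_half_sq w, sq, mul_re]; ring
  exact abs_lt_of_sq_lt_sq (by nlinarith) hz.le

theorem re_mul_pos_of_abs_im_lt_re {u v : ℂ} (hu : |u.im| < u.re) (hv : |v.im| < v.re) :
    0 < (u * v).re := by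
  have := mul_lt_mul'' hu hv (abs_nonneg _) (abs_nonneg _)
  rw [mul_re]
  linarith [le_abs_self (u.im * v.im), abs_mul u.im v.im]

theorem cpow_half_I_mul_ofReal {r : ℝ} (hr : 0 < r) :
    (I * r) ^ (1 / 2 : ℂ) = √(r / 2) * (1 + I) := by
  refine cpow_half_eq_of_sq_eq (by simp [hr]) ?_
  rw [mul_pow, ← ofReal_pow, Real.sq_sqrt (half_pos hr).le]
  push_cast
  linear_combination (r / 2 : ℂ) * I_sq

theorem cpow_half_I_mul_ofReal_mul {r : ℝ} (hr : 0 < r) {w : ℂ} (hw : 0 < w.re) :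
    (I * r * w) ^ (1 / 2 : ℂ) = (I * r) ^ (1 / 2 : ℂ) * w ^ (1 / 2 : ℂ) := by
  refine cpow_half_eq_of_sq_eq ?_ (by rw [mul_pow, cpow_half_sq, cpow_half_sq])
  have hsqrt := Real.sqrt_pos.mpr (half_pos hr)
  rw [cpow_half_I_mul_ofReal hr, mul_assoc]
  have := abs_im_cpow_half_lt_re hw
  simp only [mul_re, ofReal_re, ofReal_im, add_re, add_im, one_re, one_im, I_re, I_im, mul_im]
  nlinarith [abs_lt.mp this]

theorem cpow_half_neg_I_mul_ofReal_mul {r : ℝ} (hr : 0 < r) {w : ℂ} (hw : 0 < w.re) :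
    (-(I * r) * w) ^ (1 / 2 : ℂ) = -I * (I * r) ^ (1 / 2 : ℂ) * w ^ (1 / 2 : ℂ) := by
  refine cpow_half_eq_of_sq_eq ?_ (by
    rw [mul_pow, mul_pow, cpow_half_sq, cpow_half_sq]
    linear_combination (I * r * w) * I_sq)
  have hsqrt := Real.sqrt_pos.mpr (half_pos hr)
  rw [cpow_half_I_mul_ofReal hr]
  have := abs_im_cpow_half_lt_re hw
  simp only [mul_re, ofReal_re, ofReal_im, add_re, add_im, one_re, one_im, I_re, I_im, mul_im,
    neg_re, neg_im]
  nlinarith [abs_lt.mp this]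

theorem log_div_of_im_mul_pos {x y : ℂ} (h : 0 < x.im * y.im) :
    log (x / y) = log x - log y := by
  have hx : x ≠ 0 := by rintro rfl; simp at h
  have hy : y ≠ 0 := by rintro rfl; simp at h
  have hπ : y.arg ≠ π := fun hπ => by simp [(arg_eq_pi_iff.mp hπ).2] at h
  have harg : x.arg + y⁻¹.arg ∈ Set.Ioc (-π) π := by
    rw [arg_inv, if_neg hπ]
    rcases lt_or_gt_of_ne (left_ne_zero_of_mul h.ne') with hxi | hxi
    · have hyi : y.im < 0 := by nlinarith
      have := arg_neg_iff.mpr hxi; have := arg_neg_iff.mpr hyi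
      constructor <;> linarith [neg_pi_lt_arg x, neg_pi_lt_arg y]
    · have hyi : 0 < y.im := by nlinarith
      have := arg_nonneg_iff.mpr hxi.le; have := arg_nonneg_iff.mpr hyi.le
      have := arg_lt_pi_iff.mpr (Or.inr hxi.ne'); have := arg_lt_pi_iff.mpr (Or.inr hyi.ne')
      constructor <;> linarith
  rw [div_eq_mul_inv, log_mul hx (inv_ne_zero hy) harg, log_inv y hπ, sub_eq_add_neg]

noncomputable def sqrtMobius (A w : ℂ) : ℂ :=
  (w ^ (1 / 2 : ℂ) - A ^ (1 / 2 : ℂ)) / (w ^ (1 / 2 : ℂ) + A ^ (1 / 2 : ℂ))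

noncomputable def sqrtDivSubPrimitive (A w : ℂ) : ℂ :=
  2 * w ^ (1 / 2 : ℂ) + A ^ (1 / 2 : ℂ) * log (sqrtMobius A w)

/-- Both sides are `0` when `w = A`, by the convention `x / 0 = 0`. -/
theorem sqrtMobius_eq (A w : ℂ) :
    sqrtMobius A w = (w ^ (1 / 2 : ℂ) - A ^ (1 / 2 : ℂ)) ^ 2 / (w - A) := by
  have hw := cpow_half_sq w
  have hA := cpow_half_sq A
  rw [sqrtMobius]
  generalize w ^ (1 / 2 : ℂ) = z at hw ⊢
  generalize A ^ (1 / 2 : ℂ) = α at hA ⊢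
  subst hw hA
  rcases eq_or_ne (z - α) 0 with h | h
  · simp [h]
  rw [sq_sub_sq, sq, mul_div_mul_right _ _ h]

theorem sqrtMobius_div_sqrtMobius (A w w' : ℂ) :
    sqrtMobius A w / sqrtMobius A w' =
      (w' - A) / (w - A) * ((w ^ (1 / 2 : ℂ) - A ^ (1 / 2 : ℂ)) ^ 2 /
        (w' ^ (1 / 2 : ℂ) - A ^ (1 / 2 : ℂ)) ^ 2) := by
  rw [sqrtMobius_eq, sqrtMobius_eq, div_div_div_eq, div_mul_div_comm, mul_comm (w' - A)]

/-- With `u = √w · conj √A`, `Im ((√w - √A)/(√w + √A)) = 2 Im u / |√w + √A|²`; and `u` lies in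
the right half-plane, so `Im u` has the sign of `Im u² = Im (w · conj A)`. -/
theorem mul_im_sqrtMobius_pos {A w : ℂ} {c : ℝ} (hw : 0 < w.re) (hA : 0 < A.re)
    (h : 0 < c * (w * conj A).im) : 0 < c * (sqrtMobius A w).im := by
  set z := w ^ (1 / 2 : ℂ)
  set α := A ^ (1 / 2 : ℂ)
  set u := z * conj α
  have hu : 0 < u.re := re_mul_pos_of_abs_im_lt_re (abs_im_cpow_half_lt_re hw)
    (by rw [conj_re, conj_im, abs_neg]; exact abs_im_cpow_half_lt_re hA)
  have hu2 : (w * conj A).im = 2 * u.re * u.im := by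
    rw [← cpow_half_sq w, ← cpow_half_sq A, map_pow, ← mul_pow, sq, mul_im]; ring
  have hg : (sqrtMobius A w).im = 2 * u.im / normSq (z + α) := by
    simp only [sqrtMobius, div_im, u, mul_im, conj_re, conj_im, sub_re, sub_im, add_re, add_im,
      normSq_apply]
    ring
  have hzα : 0 < normSq (z + α) := by
    have hre : 0 < (z + α).re :=
      add_pos (re_cpow_half_pos (Or.inl hw)) (re_cpow_half_pos (Or.inl hA))
    exact normSq_pos.mpr fun h0 => by simp [h0] at hre
  rw [hu2] at h
  rw [hg, mul_div_assoc']
  exact div_pos (by nlinarith) hzα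

theorem hasDerivAt_cpow_half {w : ℂ} (hw : w ∈ slitPlane) :
    HasDerivAt (fun w : ℂ => w ^ (1 / 2 : ℂ)) (1 / (2 * w ^ (1 / 2 : ℂ))) w := by
  have hw0 : w ≠ 0 := slitPlane_ne_zero hw
  have hz : w ^ (1 / 2 : ℂ) ≠ 0 := (cpow_ne_zero_iff_of_exponent_ne_zero (by norm_num)).mpr hw0
  refine ((hasDerivAt_id w).cpow_const (c := 1 / 2) hw).congr_deriv ?_
  rw [id, cpow_sub _ _ hw0, cpow_one]
  have hw2 := cpow_half_sq w
  generalize w ^ (1 / 2 : ℂ) = z at hz hw2 ⊢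
  subst hw2
  field_simp

theorem hasDerivAt_sqrtDivSubPrimitive {A w : ℂ} (hw : w ∈ slitPlane)
    (hg : sqrtMobius A w ∈ slitPlane) :
    HasDerivAt (sqrtDivSubPrimitive A) (w ^ (1 / 2 : ℂ) / (w - A)) w := by
  have hz : w ^ (1 / 2 : ℂ) ≠ 0 :=
    (cpow_ne_zero_iff_of_exponent_ne_zero (by norm_num)).mpr (slitPlane_ne_zero hw)
  obtain ⟨hzα, hzα'⟩ := div_ne_zero_iff.mp (slitPlane_ne_zero hg)
  have hz' := hasDerivAt_cpow_half hw
  have hlog := ((hz'.sub_const (A ^ (1 / 2 : ℂ))).div (hz'.add_const _) hzα').clog hg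
  refine ((hz'.const_mul 2).add (hlog.const_mul (A ^ (1 / 2 : ℂ)))).congr_deriv ?_
  have hw2 := cpow_half_sq w
  have hA2 := cpow_half_sq A
  simp only [Pi.div_apply]
  generalize w ^ (1 / 2 : ℂ) = z at hz hzα hzα' hw2 ⊢
  generalize A ^ (1 / 2 : ℂ) = α at hzα hzα' hA2 ⊢
  subst hw2 hA2
  have hzα2 : z ^ 2 - α ^ 2 ≠ 0 := by rw [sq_sub_sq]; exact mul_ne_zero hzα' hzα
  field_simp
  ring

theorem integral_cpow_half_eq_sub {f : ℝ → ℂ} {A : ℂ} {x y : ℝ}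
    (hf : ∀ s, HasDerivAt f (f s - A) s) (hslit : ∀ s ∈ Set.uIcc x y, f s ∈ slitPlane)
    (hg : ∀ s ∈ Set.uIcc x y, sqrtMobius A (f s) ∈ slitPlane) :
    ∫ s in x..y, f s ^ (1 / 2 : ℂ) = sqrtDivSubPrimitive A (f y) - sqrtDivSubPrimitive A (f x) := by
  have hfc : Continuous f := continuous_iff_continuousAt.2 fun s => (hf s).continuousAt
  refine intervalIntegral.integral_eq_sub_of_hasDerivAt (f := sqrtDivSubPrimitive A ∘ f)
    (fun s hs => ?_) ((hfc.continuousOn.cpow_const hslit).intervalIntegrable)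
  have hA : f s - A ≠ 0 := fun h => by
    simpa [sqrtMobius, sub_eq_zero.mp h] using slitPlane_ne_zero (hg s hs)
  simpa [hA] using (hasDerivAt_sqrtDivSubPrimitive (hslit s hs) (hg s hs)).comp s (hf s)

end Complex

open Complex ComplexConjugate

noncomputable def igRadicand (b x : ℝ) : ℂ := (b : ℂ) ^ 2 - 2 * I * x

noncomputable def igExponent (a b x : ℝ) : ℂ := -a * (igRadicand b x ^ (1 / 2 : ℂ) - b)

section igRadicand

variable (b : ℝ)

theorem igRadicand_zero : igRadicand b 0 = (b : ℂ) ^ 2 := by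
  simp [igRadicand]

theorem igRadicand_sub_igRadicand (x y : ℝ) :
    igRadicand b x - igRadicand b y = 2 * I * (y - x) := by
  simp only [igRadicand]
  ring

theorem re_igRadicand (x : ℝ) : (igRadicand b x).re = b ^ 2 := by
  simp [igRadicand, sq]

theorem im_igRadicand_mul_conj (x y : ℝ) :
    (igRadicand b x * conj (igRadicand b y)).im = 2 * b ^ 2 * (y - x) := by
  simp only [igRadicand, mul_im, mul_re, sub_re, sub_im, conj_re, conj_im, ofReal_re, ofReal_im,
    I_re, I_im, sq, re_ofNat, im_ofNat]
  ring

theorem hasDerivAt_igRadicand_exp (c L s : ℝ) :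
    HasDerivAt (fun s => igRadicand b (c * (1 - Real.exp (-L + s))))
      (igRadicand b (c * (1 - Real.exp (-L + s))) - igRadicand b c) s := by
  have h := ((((hasDerivAt_id s).const_add (-L)).exp.const_sub 1).const_mul c).ofReal_comp
  refine (h.const_mul (2 * I)).const_sub ((b : ℂ) ^ 2) |>.congr_deriv ?_
  rw [igRadicand_sub_igRadicand]
  push_cast [id]
  ring

theorem igRadicand_sub_div_igRadicand_sub {c : ℝ} (hc : c ≠ 0) (L : ℝ) :
    (igRadicand b (c * (1 - Real.exp (-L))) - igRadicand b c) / (igRadicand b 0 - igRadicand b c) =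
      Real.exp (-L) := by
  have hc' : (c : ℂ) ≠ 0 := ofReal_ne_zero.mpr hc
  rw [igRadicand_sub_igRadicand, igRadicand_sub_igRadicand]
  push_cast
  field_simp
  ring

variable {b}

theorem mul_im_sqrtMobius_igRadicand_pos (hb : b ≠ 0) {x y : ℝ} (hxy : x ≠ y) :
    0 < (y - x) * (sqrtMobius (igRadicand b y) (igRadicand b x)).im := by
  refine mul_im_sqrtMobius_pos (by rw [re_igRadicand]; positivity)
    (by rw [re_igRadicand]; positivity) ?_
  rw [im_igRadicand_mul_conj, show (y - x) * (2 * b ^ 2 * (y - x)) = 2 * b ^ 2 * (y - x) ^ 2 by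
    ring]
  have : y - x ≠ 0 := sub_ne_zero.mpr hxy.symm
  positivity

theorem log_div_sqrtMobius_igRadicand (hb : b ≠ 0) {x x' y : ℝ} (h : 0 < (y - x) * (y - x')) :
    log (sqrtMobius (igRadicand b y) (igRadicand b x) /
        sqrtMobius (igRadicand b y) (igRadicand b x')) =
      log (sqrtMobius (igRadicand b y) (igRadicand b x)) -
        log (sqrtMobius (igRadicand b y) (igRadicand b x')) := by
  have hx : x ≠ y := fun hx => by simp [hx] at h
  have hx' : x' ≠ y := fun hx' => by simp [hx'] at h
  refine log_div_of_im_mul_pos (pos_of_mul_pos_right (a := (y - x) * (y - x')) ?_ h.le)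
  nlinarith [mul_pos (mul_im_sqrtMobius_igRadicand_pos hb hx)
    (mul_im_sqrtMobius_igRadicand_pos hb hx')]

theorem integral_igExponent (a : ℝ) (hb : b ≠ 0) {c : ℝ} (hc : c ≠ 0) (L : ℝ) :
    ∫ s in (0 : ℝ)..L, igExponent a b (c * (1 - Real.exp (-L + s))) =
      -a * (sqrtDivSubPrimitive (igRadicand b c) (b ^ 2) -
        sqrtDivSubPrimitive (igRadicand b c) (igRadicand b (c * (1 - Real.exp (-L)))) - L * b) := by
  have hre : ∀ x, igRadicand b x ∈ slitPlane := fun x => Or.inl (by rw [re_igRadicand]; positivity)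
  have hslit : ∀ s, sqrtMobius (igRadicand b c) (igRadicand b (c * (1 - Real.exp (-L + s)))) ∈
      slitPlane := fun s => by
    have hne : c * (1 - Real.exp (-L + s)) ≠ c := fun h => by
      have : c * Real.exp (-L + s) = 0 := by linarith
      simp [hc, Real.exp_ne_zero] at this
    exact Or.inr (right_ne_zero_of_mul (mul_im_sqrtMobius_igRadicand_pos hb hne).ne')
  have hcont : Continuous fun s => igRadicand b (c * (1 - Real.exp (-L + s))) :=
    continuous_iff_continuousAt.2 fun s => (hasDerivAt_igRadicand_exp b c L s).continuousAt
  change ∫ s in (0 : ℝ)..L,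
      -(a : ℂ) * (igRadicand b (c * (1 - Real.exp (-L + s))) ^ (1 / 2 : ℂ) - b) = _
  rw [intervalIntegral.integral_const_mul, intervalIntegral.integral_sub
    ((hcont.continuousOn.cpow_const fun s _ => hre _).intervalIntegrable) intervalIntegrable_const,
    intervalIntegral.integral_const, integral_cpow_half_eq_sub (hasDerivAt_igRadicand_exp b c L)
    (fun s _ => hre _) (fun s _ => hslit s), neg_add_cancel, Real.exp_zero, sub_self, mul_zero,
    igRadicand_zero, add_zero, sub_zero, real_smul]

theorem log_sqrtMobius_igRadicand_sub (hb : b ≠ 0) {c : ℝ} (hc : c ≠ 0) (L : ℝ) :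
    log (sqrtMobius (igRadicand b c) (igRadicand b 0)) -
        log (sqrtMobius (igRadicand b c) (igRadicand b (c * (1 - Real.exp (-L))))) =
      log (Real.exp (-L) * ((igRadicand b 0 ^ (1 / 2 : ℂ) - igRadicand b c ^ (1 / 2 : ℂ)) ^ 2 /
        (igRadicand b (c * (1 - Real.exp (-L))) ^ (1 / 2 : ℂ) -
          igRadicand b c ^ (1 / 2 : ℂ)) ^ 2)) := by
  have hsign : 0 < (c - 0) * (c - c * (1 - Real.exp (-L))) := by
    rw [show (c - 0) * (c - c * (1 - Real.exp (-L))) = c ^ 2 * Real.exp (-L) by ring]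
    positivity
  rw [← log_div_sqrtMobius_igRadicand hb hsign, sqrtMobius_div_sqrtMobius,
    igRadicand_sub_div_igRadicand_sub b hc]

end igRadicand

theorem neg_I_mul_ofReal_mul_igRadicand {lam : ℝ} (hlam : lam ≠ 0) (b θ : ℝ) :
    -(I * lam) * igRadicand b (θ * lam⁻¹) = -2 * θ - I * lam * b ^ 2 := by
  have hlam' : (lam : ℂ) ≠ 0 := ofReal_ne_zero.mpr hlam
  simp only [igRadicand]
  push_cast
  field_simp
  linear_combination (2 * θ : ℂ) * I_sq

theorem I_mul_ofReal_mul_igRadicand {lam : ℝ} (hlam : lam ≠ 0) (b θ t : ℝ) :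
    I * lam * igRadicand b (θ * lam⁻¹ * (1 - Real.exp (-(lam * t)))) =
      2 * θ * (1 - cexp (-lam * t)) + I * lam * b ^ 2 := by
  have hlam' : (lam : ℂ) ≠ 0 := ofReal_ne_zero.mpr hlam
  simp only [igRadicand, ofReal_mul, ofReal_sub, ofReal_one, ofReal_exp, ofReal_neg, ofReal_inv,
    neg_mul]
  field_simp
  linear_combination (-2 * θ * (1 - cexp (-(lam * t)))) * I_sq

theorem integral_IG_exponent_closed_form_general
    (a b lam t θ : ℝ) (hb : 0 < b) (hlam : 0 < lam)
    (hθ : θ ≠ 0)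
    (Ψ : ℝ → ℂ)
    (hΨ : ∀ x : ℝ, Ψ x = -(a : ℂ) * (((b : ℂ) ^ 2 - 2 * Complex.I * (x : ℂ)) ^ ((1 : ℂ)/2) - (b : ℂ)))
    (T₁ T₂ G : ℂ)
    (hT₁ : T₁ = (-2 * (θ : ℂ) - Complex.I * (lam : ℂ) * (b : ℂ) ^ 2) ^ ((1 : ℂ)/2))
    (hT₂ : T₂ = (2 * (θ : ℂ) * (1 - Complex.exp (-(lam : ℂ) * (t : ℂ))) + Complex.I * (lam : ℂ) * (b : ℂ) ^ 2) ^ ((1 : ℂ)/2))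
    (hG : G = Complex.log (Complex.exp (-(lam : ℂ) * (t : ℂ)) *
        (T₁ + Complex.I * ((Complex.I * (lam : ℂ)) ^ ((1 : ℂ)/2)) * (b : ℂ)) ^ 2 /
        (T₁ + Complex.I * T₂) ^ 2)) :
    (∫ s in (0 : ℝ)..(lam * t), Ψ (θ * lam⁻¹ * (1 - Real.exp (-(lam * t) + s))))
      = -(2 * (a : ℂ) / ((Complex.I * (lam : ℂ)) ^ ((1 : ℂ)/2))) *
          (-T₂ + ((Complex.I * (lam : ℂ)) ^ ((1 : ℂ)/2)) * (b : ℂ) + (Complex.I / 2) * T₁ * G)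
        + (lam : ℂ) * (a : ℂ) * (b : ℂ) * (t : ℂ) := by
  obtain rfl : Ψ = igExponent a b := funext hΨ
  have hc : θ * lam⁻¹ ≠ 0 := mul_ne_zero hθ (inv_ne_zero hlam.ne')
  set A := igRadicand b (θ * lam⁻¹)
  set f₀ := igRadicand b (θ * lam⁻¹ * (1 - Real.exp (-(lam * t))))
  set S := (I * lam) ^ (1 / 2 : ℂ)
  have hS : S ≠ 0 := (cpow_ne_zero_iff_of_exponent_ne_zero (by norm_num)).mpr
    (mul_ne_zero I_ne_zero (ofReal_ne_zero.mpr hlam.ne'))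
  have hT₁' : T₁ = -I * S * A ^ (1 / 2 : ℂ) := by
    rw [hT₁, ← neg_I_mul_ofReal_mul_igRadicand hlam.ne',
      cpow_half_neg_I_mul_ofReal_mul hlam (by rw [re_igRadicand]; positivity)]
  have hT₂' : T₂ = S * f₀ ^ (1 / 2 : ℂ) := by
    rw [hT₂, ← I_mul_ofReal_mul_igRadicand hlam.ne',
      cpow_half_I_mul_ofReal_mul hlam (by rw [re_igRadicand]; positivity)]
  have hG' : G = log (sqrtMobius A (b ^ 2)) - log (sqrtMobius A f₀) := by
    rw [← igRadicand_zero, log_sqrtMobius_igRadicand_sub hb.ne' hc, igRadicand_zero,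
      sq_cpow_half (by simpa using hb), ofReal_exp, ofReal_neg, ofReal_mul lam t, ← neg_mul, hG,
      hT₁', hT₂', show -I * S * A ^ (1 / 2 : ℂ) + I * S * b = I * S * (b - A ^ (1 / 2 : ℂ)) by ring,
      show -I * S * A ^ (1 / 2 : ℂ) + I * (S * f₀ ^ (1 / 2 : ℂ)) =
        I * S * (f₀ ^ (1 / 2 : ℂ) - A ^ (1 / 2 : ℂ)) by ring,
      mul_pow (I * S) _ 2, mul_pow (I * S) _ 2, mul_div_assoc,
      mul_div_mul_left _ _ (pow_ne_zero 2 (mul_ne_zero I_ne_zero hS))]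
  rw [integral_igExponent _ hb.ne' hc, hT₁', hT₂', hG', sqrtDivSubPrimitive, sqrtDivSubPrimitive,
    sq_cpow_half (by simpa using hb)]
  push_cast
  linear_combination
    (2 * a * (-f₀ ^ (1 / 2 : ℂ) + b - I ^ 2 / 2 * A ^ (1 / 2 : ℂ) *
      (log (sqrtMobius A (b ^ 2)) - log (sqrtMobius A f₀)))) * mul_inv_cancel₀ hS -
    a * A ^ (1 / 2 : ℂ) * (log (sqrtMobius A (b ^ 2)) - log (sqrtMobius A f₀)) * I_sq

/-- Closed-form evaluation of the cumulant integral `I_F(λt, θ)` for the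
Inverse Gaussian characteristic exponent `Ψ(x) = -a(√(b² - 2ix) - b)`
(principal branch of the complex square root and logarithm). -/
theorem integral_IG_exponent_closed_form
    (a b lam t θ : ℝ) (ha : 0 < a) (hb : 0 < b) (hlam : 0 < lam) (ht : 0 < t)
    (hθ : θ ≠ 0)
    (Ψ : ℝ → ℂ)
    (hΨ : ∀ x : ℝ, Ψ x = -(a : ℂ) * (((b : ℂ) ^ 2 - 2 * Complex.I * (x : ℂ)) ^ ((1 : ℂ)/2) - (b : ℂ)))
    (T₁ T₂ G : ℂ)
    (hT₁ : T₁ = (-2 * (θ : ℂ) - Complex.I * (lam : ℂ) * (b : ℂ) ^ 2) ^ ((1 : ℂ)/2))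
    (hT₂ : T₂ = (2 * (θ : ℂ) * (1 - Complex.exp (-(lam : ℂ) * (t : ℂ))) + Complex.I * (lam : ℂ) * (b : ℂ) ^ 2) ^ ((1 : ℂ)/2))
    (hG : G = Complex.log (Complex.exp (-(lam : ℂ) * (t : ℂ)) *
        (T₁ + Complex.I * ((Complex.I * (lam : ℂ)) ^ ((1 : ℂ)/2)) * (b : ℂ)) ^ 2 /
        (T₁ + Complex.I * T₂) ^ 2)) :
    (∫ s in (0 : ℝ)..(lam * t), Ψ (θ * lam⁻¹ * (1 - Real.exp (-(lam * t) + s))))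
      = -(2 * (a : ℂ) / ((Complex.I * (lam : ℂ)) ^ ((1 : ℂ)/2))) *
          (-T₂ + ((Complex.I * (lam : ℂ)) ^ ((1 : ℂ)/2)) * (b : ℂ) + (Complex.I / 2) * T₁ * G)
        + (lam : ℂ) * (a : ℂ) * (b : ℂ) * (t : ℂ) :=
  integral_IG_exponent_closed_form_general a b lam t θ hb hlam hθ Ψ hΨ T₁ T₂ G hT₁ hT₂ hG
end

section
/- Let a, b, λ, t > 0, let n ≥ 2 be an integer, and let Ψ(x) = -a(√(b² - 2ix) - b) for real x, where √ denotes the principal branch of the complex square root. Then for every nonzero real θ, the n-th derivative of I(θ) = ∫₀^{λt} Ψ( θ λ⁻¹ (1 - e^{-λt+s}) ) ds exists at θ and equals I⁽ⁿ⁾(θ) = (-1)ⁿ ( ∏_{k=2}^{n} (2k-3) ) (a/√(iλ)) ∫₀^{λt} (1 - e^{-λt+s})ⁿ ( 2θ (1 - e^{-λt+s}) + i λ b² )^{-(2n-1)/2} ds, where the complex power w^{-(2n-1)/2} is taken with the principal branch. -/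
/-!
Since `iλ (b² - 2iθu/λ) = 2θu + iλb²`, where `arg (iλ) = π/2` and the other factor has positive
real part, the principal square root splits and the integrand of `I(θ)` becomes
`ab - a (iλ)^(-1/2) (2θu + iλb²)^(1/2)`. A base `cθu + β` that never meets the branch cut (here
`Im β = λb² > 0`) lets `∫ uᵐ (cθu + β)ʷ` be differentiated under the integral sign, giving
`c w ∫ u^(m+1) (cθu + β)^(w-1)`. After `n ≥ 1` steps the constant
`∏_{j<n} (1 - 2j) = -(-1)ⁿ ∏_{k=2}^n (2k-3)` appears and the additive constant `abλt` is gone.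
-/

open MeasureTheory Complex intervalIntegral Set Finset

noncomputable def powerIntegral (u : ℝ → ℝ) (c β : ℂ) (T : ℝ) (m : ℕ) (w : ℂ) (θ : ℝ) : ℂ :=
  ∫ s in (0 : ℝ)..T, (u s : ℂ) ^ m * (c * θ * u s + β) ^ w

section powerIntegral

variable {u : ℝ → ℝ} {c β : ℂ}

theorem continuous_powerIntegrand (hu : Continuous u) (hslit : ∀ r : ℝ, c * r + β ∈ slitPlane)
    (m : ℕ) (w : ℂ) :
    Continuous fun p : ℝ × ℝ => (u p.2 : ℂ) ^ m * (c * p.1 * u p.2 + β) ^ w := by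
  refine (by fun_prop : Continuous fun p : ℝ × ℝ => (u p.2 : ℂ) ^ m).mul
    ((by fun_prop : Continuous fun p : ℝ × ℝ => c * p.1 * u p.2 + β).cpow continuous_const
      fun p => ?_)
  simpa [mul_assoc] using hslit (p.1 * u p.2)

theorem continuous_powerIntegrand_apply (hu : Continuous u)
    (hslit : ∀ r : ℝ, c * r + β ∈ slitPlane) (m : ℕ) (w : ℂ) (y : ℝ) :
    Continuous fun s => (u s : ℂ) ^ m * (c * y * u s + β) ^ w :=
  (continuous_powerIntegrand hu hslit m w).comp (continuous_const.prodMk continuous_id)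

theorem hasDerivAt_powerIntegrand (hslit : ∀ r : ℝ, c * r + β ∈ slitPlane) (m : ℕ) (w : ℂ)
    (s y : ℝ) :
    HasDerivAt (fun y : ℝ => (u s : ℂ) ^ m * (c * y * u s + β) ^ w)
      (c * w * ((u s : ℂ) ^ (m + 1) * (c * y * u s + β) ^ (w - 1))) y := by
  have hbase : HasDerivAt (fun z : ℂ => c * z * u s + β) (c * u s) y := by
    simpa using ((hasDerivAt_id (y : ℂ)).const_mul c).mul_const (u s : ℂ) |>.add_const β
  have hmem : c * y * u s + β ∈ slitPlane := by
    simpa [mul_assoc] using hslit (y * u s)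
  exact (((hbase.cpow_const hmem).comp_ofReal).const_mul ((u s : ℂ) ^ m)).congr_deriv (by ring)

theorem hasDerivAt_powerIntegral (hu : Continuous u) (hslit : ∀ r : ℝ, c * r + β ∈ slitPlane)
    (T : ℝ) (m : ℕ) (w : ℂ) (x : ℝ) :
    HasDerivAt (powerIntegral u c β T m w)
      (c * w * powerIntegral u c β T (m + 1) (w - 1) x) x := by
  -- joint continuity bounds the `θ`-derivative uniformly on a compact neighbourhood
  obtain ⟨C, hC⟩ := ((isCompact_closedBall x 1).prod (isCompact_uIcc (a := 0) (b := T)))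
    |>.exists_bound_of_continuousOn
      (continuous_powerIntegrand hu hslit (m + 1) (w - 1)).continuousOn
  have key := intervalIntegral.hasDerivAt_integral_of_dominated_loc_of_deriv_le (𝕜 := ℝ)
    (μ := volume) (a := 0) (b := T)
    (F' := fun y s => c * w * ((u s : ℂ) ^ (m + 1) * (c * y * u s + β) ^ (w - 1)))
    (bound := fun _ => ‖c * w‖ * C) (Metric.ball_mem_nhds x one_pos)
    (.of_forall fun y => (continuous_powerIntegrand_apply hu hslit m w y).aestronglyMeasurable)
    ((continuous_powerIntegrand_apply hu hslit m w x).intervalIntegrable _ _)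
    ((continuous_const.mul
      (continuous_powerIntegrand_apply hu hslit (m + 1) (w - 1) x)).aestronglyMeasurable)
    (ae_of_all _ fun s hs y hy => ?_) intervalIntegrable_const
    (ae_of_all _ fun s _ y _ => hasDerivAt_powerIntegrand hslit m w s y)
  · unfold powerIntegral
    rw [← intervalIntegral.integral_const_mul]
    exact key.2
  · rw [norm_mul]
    gcongr
    exact hC (y, s) ⟨Metric.ball_subset_closedBall hy, uIoc_subset_uIcc hs⟩

theorem iteratedDeriv_powerIntegral (hu : Continuous u) (hslit : ∀ r : ℝ, c * r + β ∈ slitPlane)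
    (T : ℝ) (m : ℕ) (w : ℂ) (k : ℕ) :
    iteratedDeriv k (powerIntegral u c β T m w) =
      fun θ => (∏ j ∈ range k, c * (w - j)) * powerIntegral u c β T (m + k) (w - k) θ := by
  induction k with
  | zero => simp
  | succ k ih =>
    funext θ
    rw [iteratedDeriv_succ, ih, ((hasDerivAt_powerIntegral hu hslit T _ _ θ).const_mul _).deriv,
      prod_range_succ, show w - k - 1 = w - ((k + 1 : ℕ) : ℂ) by push_cast; ring]
    exact (mul_assoc _ _ _).symm

end powerIntegral

theorem prod_range_one_sub_two_mul {R : Type*} [CommRing R] (n : ℕ) :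
    ∏ j ∈ range (n + 1), (1 - 2 * (j : R)) =
      (-1) ^ n * ∏ k ∈ Icc 2 (n + 1), (2 * (k : R) - 3) := by
  induction n with
  | zero => simp
  | succ n ih =>
    rw [prod_range_succ, ih, prod_Icc_succ_top (b := n + 1) (by omega)]
    push_cast
    ring

theorem Complex.mul_cpow_of_arg_add_mem {x y : ℂ} (hx : x ≠ 0) (hy : y ≠ 0)
    (h : arg x + arg y ∈ Ioc (-Real.pi) Real.pi) (w : ℂ) : (x * y) ^ w = x ^ w * y ^ w := by
  simp [cpow_def_of_ne_zero, hx, hy, log_mul hx hy h, add_mul, exp_add]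

theorem Complex.I_mul_ofReal_mul_cpow {lam : ℝ} (hlam : 0 < lam) {y : ℂ} (hy : 0 < y.re)
    (w : ℂ) :
    (I * lam * y) ^ w = (I * lam) ^ w * y ^ w := by
  have harg : arg (I * lam) = Real.pi / 2 := by
    rw [arg_eq_pi_div_two_iff]; simp [hlam]
  have hy' := abs_lt.1 (abs_arg_lt_pi_div_two_iff.2 (Or.inl hy))
  refine mul_cpow_of_arg_add_mem (by simp [hlam.ne']) (by rintro rfl; simp at hy) ?_ w
  rw [harg]
  constructor <;> linarith [Real.pi_pos]

theorem sq_sub_two_I_mul_cpow_eq_div {b lam : ℝ} (hb : b ≠ 0) (hlam : 0 < lam) (r : ℝ) (w : ℂ) :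
    ((b : ℂ) ^ 2 - 2 * I * ((r * lam⁻¹ : ℝ) : ℂ)) ^ w =
      (2 * r + I * lam * b ^ 2) ^ w / (I * lam) ^ w := by
  have hre : 0 < ((b : ℂ) ^ 2 - 2 * I * ((r * lam⁻¹ : ℝ) : ℂ)).re := by
    simp [sq, hb]
  have hfactor :
      2 * r + I * lam * b ^ 2 = I * lam * ((b : ℂ) ^ 2 - 2 * I * ((r * lam⁻¹ : ℝ) : ℂ)) := by
    have hl : (lam : ℂ) ≠ 0 := by exact_mod_cast hlam.ne'
    push_cast
    field_simp
    linear_combination (2 * (r : ℂ)) * I_sq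
  rw [hfactor, I_mul_ofReal_mul_cpow hlam hre, mul_div_cancel_left₀]
  simp [hlam.ne']

theorem two_mul_add_I_mul_mem_slitPlane {b lam : ℝ} (hb : b ≠ 0) (hlam : lam ≠ 0) (r : ℝ) :
    2 * r + I * lam * b ^ 2 ∈ slitPlane :=
  mem_slitPlane_iff.2 (Or.inr (by simp [← ofReal_pow, hlam, hb]))

theorem integral_IG_exponent_eq {a b lam : ℝ} (hb : b ≠ 0) (hlam : 0 < lam) {Ψ : ℝ → ℂ}
    (hΨ : ∀ x : ℝ, Ψ x = -(a : ℂ) * (((b : ℂ) ^ 2 - 2 * I * (x : ℂ)) ^ ((1 : ℂ) / 2) - (b : ℂ)))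
    {u : ℝ → ℝ} (hu : Continuous u) (T : ℝ) :
    (fun θ : ℝ => ∫ s in (0 : ℝ)..T, Ψ (θ * lam⁻¹ * u s)) = fun θ =>
      (T - 0) • ((a * b : ℂ)) + -a / (I * lam) ^ ((1 : ℂ) / 2) *
        powerIntegral u 2 (I * lam * b ^ 2) T 0 (1 / 2) θ := by
  have hslit := two_mul_add_I_mul_mem_slitPlane hb hlam.ne'
  have hΨu (θ s : ℝ) : Ψ (θ * lam⁻¹ * u s) = a * b + -a / (I * lam) ^ ((1 : ℂ) / 2) *
      ((u s : ℂ) ^ 0 * (2 * θ * u s + I * lam * b ^ 2) ^ ((1 : ℂ) / 2)) := by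
    rw [hΨ, show θ * lam⁻¹ * u s = θ * u s * lam⁻¹ by ring, sq_sub_two_I_mul_cpow_eq_div hb hlam]
    push_cast
    rw [← mul_assoc (2 : ℂ)]
    ring
  funext θ
  have hg := (continuous_powerIntegrand_apply hu hslit 0 (1 / 2) θ).intervalIntegrable
    (μ := volume) 0 T
  simp_rw [hΨu]
  rw [integral_add intervalIntegrable_const (hg.const_mul _), intervalIntegral.integral_const,
    intervalIntegral.integral_const_mul]
  rfl

theorem iteratedDeriv_IG_cumulant_integral_general
    (a b lam t : ℝ) (hb : 0 < b) (hlam : 0 < lam)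
    (n : ℕ) (hn : 2 ≤ n)
    (Ψ : ℝ → ℂ)
    (hΨ : ∀ x : ℝ, Ψ x = -(a : ℂ) * (((b : ℂ) ^ 2 - 2 * Complex.I * (x : ℂ)) ^ ((1 : ℂ)/2) - (b : ℂ))) :
    ∀ θ : ℝ, θ ≠ 0 →
      iteratedDeriv n
        (fun θ : ℝ => ∫ s in (0 : ℝ)..(lam * t), Ψ (θ * lam⁻¹ * (1 - Real.exp (-(lam * t) + s))))
        θ
      = (-1 : ℂ) ^ n * (∏ k ∈ Finset.Icc 2 n, (2 * (k : ℂ) - 3)) *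
          ((a : ℂ) / ((Complex.I * (lam : ℂ)) ^ ((1 : ℂ)/2))) *
          ∫ s in (0 : ℝ)..(lam * t),
            ((1 - Real.exp (-(lam * t) + s) : ℝ) : ℂ) ^ n *
              ((2 * (θ : ℂ) * ((1 - Real.exp (-(lam * t) + s) : ℝ) : ℂ) +
                Complex.I * (lam : ℂ) * (b : ℂ) ^ 2) ^ (-((2 * (n : ℂ) - 1) / 2))) := by
  intro θ _
  obtain ⟨m, rfl⟩ : ∃ m, n = m + 1 := ⟨n - 1, by omega⟩
  have hprod : ∏ j ∈ range (m + 1), (2 : ℂ) * (1 / 2 - j) =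
      (-1) ^ m * ∏ k ∈ Icc 2 (m + 1), (2 * (k : ℂ) - 3) := by
    rw [← prod_range_one_sub_two_mul]
    exact prod_congr rfl fun j _ => by ring
  have hexp : (1 : ℂ) / 2 - ((m + 1 : ℕ) : ℂ) = -((2 * ((m + 1 : ℕ) : ℂ) - 1) / 2) := by
    push_cast
    ring
  have hu : Continuous fun s => 1 - Real.exp (-(lam * t) + s) := by fun_prop
  rw [integral_IG_exponent_eq hb.ne' hlam hΨ hu, iteratedDeriv_const_add (by omega),
    iteratedDeriv_const_mul_field,
    iteratedDeriv_powerIntegral hu (two_mul_add_I_mul_mem_slitPlane hb.ne' hlam.ne'),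
    hprod, hexp, zero_add]
  unfold powerIntegral
  ring

/-- For `θ ≠ 0` and `n ≥ 2`, the `n`-th derivative of the cumulant integral
`I(θ) = ∫₀^{λt} Ψ(θλ⁻¹(1 - e^{-λt+s})) ds` equals
`(-1)ⁿ (∏_{k=2}^n (2k-3)) (a/√(iλ)) ∫₀^{λt} (1-e^{-λt+s})ⁿ (2θ(1-e^{-λt+s}) + iλb²)^{-(2n-1)/2} ds`
(principal branch complex powers). -/
theorem iteratedDeriv_IG_cumulant_integral
    (a b lam t : ℝ) (ha : 0 < a) (hb : 0 < b) (hlam : 0 < lam) (ht : 0 < t)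
    (n : ℕ) (hn : 2 ≤ n)
    (Ψ : ℝ → ℂ)
    (hΨ : ∀ x : ℝ, Ψ x = -(a : ℂ) * (((b : ℂ) ^ 2 - 2 * Complex.I * (x : ℂ)) ^ ((1 : ℂ)/2) - (b : ℂ))) :
    ∀ θ : ℝ, θ ≠ 0 →
      iteratedDeriv n
        (fun θ : ℝ => ∫ s in (0 : ℝ)..(lam * t), Ψ (θ * lam⁻¹ * (1 - Real.exp (-(lam * t) + s))))
        θ
      = (-1 : ℂ) ^ n * (∏ k ∈ Finset.Icc 2 n, (2 * (k : ℂ) - 3)) *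
          ((a : ℂ) / ((Complex.I * (lam : ℂ)) ^ ((1 : ℂ)/2))) *
          ∫ s in (0 : ℝ)..(lam * t),
            ((1 - Real.exp (-(lam * t) + s) : ℝ) : ℂ) ^ n *
              ((2 * (θ : ℂ) * ((1 - Real.exp (-(lam * t) + s) : ℝ) : ℂ) +
                Complex.I * (lam : ℂ) * (b : ℂ) ^ 2) ^ (-((2 * (n : ℂ) - 1) / 2))) :=
  iteratedDeriv_IG_cumulant_integral_general a b lam t hb hlam n hn Ψ hΨ
end

section
/- Let a, b, λ, t > 0, let n ≥ 2 be an integer, and let Ψ(x) = -a(√(b² - 2ix) - b) for real x, where √ denotes the principal branch of the complex square root. Then the n-th derivative at θ = 0 of I(θ) = ∫₀^{λt} Ψ( θ λ⁻¹ (1 - e^{-λt+s}) ) ds equals I⁽ⁿ⁾(0) = (-1)ⁿ ( ∏_{k=2}^{n} (2k-3) ) ( a / ((iλ)ⁿ b^{2n-1}) ) [ ∑_{k=1}^{n} C(n,k) (-1)^{k} (1 - e^{-kλt})/k + λt ], where C(n,k) denotes the binomial coefficient. -/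
/-!
Writing `g(s) = λ⁻¹(1 - e^{s-λt})`, the integral is `I(θ) = ∫₀^{λt} Ψ(θ g(s)) ds`. Every derivative
of `Ψ` of order `≥ 1` is a multiple of `(b² - 2ix)^{1/2-m}`, whose modulus is at most `b^{1-2m}`
because `b² - 2ix` has real part `b²`; so one may differentiate under the integral sign `n` times,
getting `I⁽ⁿ⁾(0) = Ψ⁽ⁿ⁾(0) ∫₀^{λt} g(s)ⁿ ds`. The last integral is computed by expanding
`(1 - e^{s-λt})ⁿ` binomially.
-/

open MeasureTheory Complex Finset

section DifferentiationUnderIntegral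

variable {g : ℝ → ℝ} {α β : ℝ}

theorem hasDerivAt_integral_pow_mul_comp_mul {φ φ' : ℝ → ℂ}
    (hφ : ∀ x, HasDerivAt φ (φ' x) x) (hφ' : Continuous φ') {C : ℝ} (hC : ∀ x, ‖φ' x‖ ≤ C)
    (hg : Continuous g) (m : ℕ) (θ : ℝ) :
    HasDerivAt (fun θ => ∫ s in α..β, (g s : ℂ) ^ m * φ (θ * g s))
      (∫ s in α..β, (g s : ℂ) ^ (m + 1) * φ' (θ * g s)) θ := by
  have hφc : Continuous φ := Differentiable.continuous fun x => (hφ x).differentiableAt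
  have hcont : ∀ (ψ : ℝ → ℂ) (k : ℕ) (x : ℝ), Continuous ψ →
      Continuous fun s => (g s : ℂ) ^ k * ψ (x * g s) := fun ψ k x hψ => by fun_prop
  refine (intervalIntegral.hasDerivAt_integral_of_dominated_loc_of_deriv_le
    (F' := fun x s => (g s : ℂ) ^ (m + 1) * φ' (x * g s))
    (bound := fun s => |g s| ^ (m + 1) * C) (Metric.ball_mem_nhds θ one_pos)
    (.of_forall fun x => (hcont φ m x hφc).aestronglyMeasurable)
    ((hcont φ m θ hφc).intervalIntegrable _ _)
    (hcont φ' (m + 1) θ hφ').aestronglyMeasurable ?_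
    ((by fun_prop : Continuous _).intervalIntegrable _ _) ?_).2
  · refine .of_forall fun s _ x _ => ?_
    rw [norm_mul, norm_pow, Complex.norm_real, Real.norm_eq_abs]
    gcongr
    exact hC _
  · refine .of_forall fun s _ x _ => ?_
    have hlin : HasDerivAt (fun x : ℝ => x * g s) (g s) x := by
      simpa using (hasDerivAt_id x).mul_const (g s)
    refine (((hφ (x * g s)).scomp x hlin).const_mul ((g s : ℂ) ^ m)).congr_deriv ?_
    rw [pow_succ, Complex.real_smul]
    ring

theorem iteratedDeriv_integral_comp_mul {f : ℕ → ℝ → ℂ}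
    (hf : ∀ m x, HasDerivAt (f m) (f (m + 1) x) x)
    (hbdd : ∀ m, ∃ C, ∀ x, ‖f (m + 1) x‖ ≤ C) (hg : Continuous g) (n : ℕ) :
    iteratedDeriv n (fun θ => ∫ s in α..β, f 0 (θ * g s)) =
      fun θ => ∫ s in α..β, (g s : ℂ) ^ n * f n (θ * g s) := by
  induction n with
  | zero => simp
  | succ n ih =>
    obtain ⟨C, hC⟩ := hbdd n
    have hcont : Continuous (f (n + 1)) :=
      Differentiable.continuous fun x => (hf (n + 1) x).differentiableAt
    rw [iteratedDeriv_succ, ih]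
    exact funext fun θ => (hasDerivAt_integral_pow_mul_comp_mul (hf n) hcont hC hg n θ).deriv

end DifferentiationUnderIntegral

theorem integral_exp_mul_sub (T c : ℝ) (hc : c ≠ 0) :
    ∫ s in (0:ℝ)..T, Real.exp (c * s - c * T) = (1 - Real.exp (-(c * T))) / c := by
  rw [intervalIntegral.integral_comp_mul_sub (f := Real.exp) hc, integral_exp, sub_self,
    Real.exp_zero, mul_zero, zero_sub, smul_eq_mul, inv_mul_eq_div]

theorem integral_one_sub_exp_sub_pow (T : ℝ) (n : ℕ) :
    ∫ s in (0:ℝ)..T, (1 - Real.exp (s - T)) ^ n =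
      T + ∑ k ∈ Icc 1 n, (n.choose k : ℝ) * (-1) ^ k * (1 - Real.exp (-(k * T))) / k := by
  have hexpand : ∀ s, (1 - Real.exp (s - T)) ^ n =
      ∑ k ∈ range (n + 1), (n.choose k : ℝ) * (-1) ^ k * Real.exp (k * s - k * T) := by
    intro s
    rw [sub_eq_neg_add, add_pow]
    refine sum_congr rfl fun k _ => ?_
    rw [one_pow, mul_one, neg_pow, ← Real.exp_nat_mul, mul_sub]
    ring
  simp_rw [hexpand]
  rw [intervalIntegral.integral_finsetSum
    (fun k _ => (by fun_prop : Continuous _).intervalIntegrable _ _), range_eq_Ico,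
    sum_eq_sum_Ico_succ_bot (Nat.succ_pos n)]
  congr 1
  · simp
  · refine sum_congr rfl fun k hk => ?_
    have hk : (k : ℝ) ≠ 0 := by have := (mem_Ico.1 hk).1; positivity
    rw [intervalIntegral.integral_const_mul, integral_exp_mul_sub T k hk]
    ring

noncomputable def igDerivCoeff (m : ℕ) : ℂ := ∏ j ∈ range m, (2 * (j : ℂ) - 1) * I

/-- The `m`-th derivative of `Ψ` (for `m = 0`, `Ψ` minus the constant `a * b`). Differentiating
`(b² - 2ix)^c` brings down `c * (-2i)`, which for `c = 1/2 - j` is the factor `(2j - 1) i` of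
`igDerivCoeff`. -/
noncomputable def igExponentDeriv (a b : ℝ) (m : ℕ) (x : ℝ) : ℂ :=
  -a * igDerivCoeff m * ((b : ℂ) ^ 2 - 2 * I * x) ^ ((1 : ℂ) / 2 - m)

theorem re_ofReal_sq_sub_two_I_mul (b x : ℝ) : ((b : ℂ) ^ 2 - 2 * I * x).re = b ^ 2 := by
  simp [← ofReal_pow]

theorem ofReal_sq_sub_two_I_mul_mem_slitPlane {b : ℝ} (hb : b ≠ 0) (x : ℝ) :
    (b : ℂ) ^ 2 - 2 * I * x ∈ slitPlane :=
  mem_slitPlane_iff.2 <| .inl <| by rw [re_ofReal_sq_sub_two_I_mul]; positivity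

theorem igDerivCoeff_succ (m : ℕ) :
    igDerivCoeff (m + 1) = igDerivCoeff m * ((2 * m - 1) * I) :=
  prod_range_succ _ _

theorem igDerivCoeff_eq {m : ℕ} (hm : 1 ≤ m) :
    igDerivCoeff m = -I ^ m * ∏ k ∈ Icc 2 m, (2 * (k : ℂ) - 3) := by
  induction m, hm using Nat.le_induction with
  | base => simp [igDerivCoeff]
  | succ m hm ih =>
    rw [igDerivCoeff_succ, ih, prod_Icc_succ_top (by omega : 2 ≤ m + 1)]
    push_cast
    ring

section

variable {a b : ℝ}

theorem hasDerivAt_igExponentDeriv (hb : b ≠ 0) (m : ℕ) (x : ℝ) :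
    HasDerivAt (igExponentDeriv a b m) (igExponentDeriv a b (m + 1) x) x := by
  have hW : HasDerivAt (fun z : ℂ => (b : ℂ) ^ 2 - 2 * I * z) (-(2 * I)) x := by
    simpa using ((hasDerivAt_id (x : ℂ)).const_mul (2 * I)).const_sub ((b : ℂ) ^ 2)
  have hpow := (hW.cpow_const (c := 1 / 2 - m)
    (ofReal_sq_sub_two_I_mul_mem_slitPlane hb x)).comp_ofReal
  refine (hpow.const_mul (-(a : ℂ) * igDerivCoeff m)).congr_deriv ?_
  rw [igExponentDeriv, igDerivCoeff_succ]
  push_cast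
  ring_nf

theorem norm_igExponentDeriv_le (hb : b ≠ 0) {m : ℕ} (hm : 1 ≤ m) (x : ℝ) :
    ‖igExponentDeriv a b m x‖ ≤ |a| * ‖igDerivCoeff m‖ * (b ^ 2) ^ ((1 : ℝ) / 2 - m) := by
  have hexp : (1 : ℂ) / 2 - m = ((1 / 2 - m : ℝ) : ℂ) := by push_cast; ring
  have hre : b ^ 2 ≤ ‖(b : ℂ) ^ 2 - 2 * I * x‖ :=
    re_ofReal_sq_sub_two_I_mul b x ▸ (le_abs_self _).trans (abs_re_le_norm _)
  rw [igExponentDeriv, norm_mul, norm_mul, norm_neg, norm_real, Real.norm_eq_abs, hexp,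
    norm_cpow_real]
  refine mul_le_mul_of_nonneg_left
    (Real.rpow_le_rpow_of_nonpos (by positivity) hre ?_) (by positivity)
  have : (1 : ℝ) ≤ m := by exact_mod_cast hm
  linarith

theorem igExponentDeriv_apply_zero (hb : 0 < b) {m : ℕ} (hm : 1 ≤ m) :
    igExponentDeriv a b m 0 =
      a * I ^ m * (∏ k ∈ Icc 2 m, (2 * (k : ℂ) - 3)) / b ^ (2 * m - 1) := by
  have hcpow : (b ^ 2 : ℝ) ^ ((1 : ℝ) / 2 - m) = (b ^ (2 * m - 1))⁻¹ := by
    rw [Real.rpow_sub (by positivity), Real.rpow_natCast, ← pow_mul, ← Real.sqrt_eq_rpow,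
      Real.sqrt_sq hb.le, ← div_mul_cancel_right₀ hb.ne' (b ^ (2 * m - 1)), ← pow_succ,
      Nat.sub_add_cancel (by omega)]
  have hexp : (1 : ℂ) / 2 - m = ((1 / 2 - m : ℝ) : ℂ) := by push_cast; ring
  rw [igExponentDeriv, ofReal_zero, mul_zero, sub_zero, hexp, ← ofReal_pow,
    ← ofReal_cpow (by positivity), hcpow, igDerivCoeff_eq hm]
  push_cast
  ring

theorem iteratedDeriv_integral_IG_exponent_comp_mul (hb : b ≠ 0) {Ψ : ℝ → ℂ}
    (hΨ : ∀ x : ℝ, Ψ x = -(a : ℂ) * (((b : ℂ) ^ 2 - 2 * I * x) ^ ((1 : ℂ) / 2) - b))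
    {g : ℝ → ℝ} (hg : Continuous g) (α β : ℝ) {n : ℕ} (hn : n ≠ 0) :
    iteratedDeriv n (fun θ => ∫ s in α..β, Ψ (θ * g s)) =
      fun θ => ∫ s in α..β, (g s : ℂ) ^ n * igExponentDeriv a b n (θ * g s) := by
  have hcont : Continuous (igExponentDeriv a b 0) :=
    Differentiable.continuous fun x => (hasDerivAt_igExponentDeriv hb 0 x).differentiableAt
  have hsplit : (fun θ => ∫ s in α..β, Ψ (θ * g s)) =
      fun θ => (β - α) • (a * b : ℂ) + ∫ s in α..β, igExponentDeriv a b 0 (θ * g s) := by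
    funext θ
    have hΨ' : ∀ s, Ψ (θ * g s) = a * b + igExponentDeriv a b 0 (θ * g s) := fun s => by
      rw [hΨ, igExponentDeriv, igDerivCoeff, prod_range_zero, Nat.cast_zero, sub_zero]
      push_cast
      ring
    simp_rw [hΨ']
    have hint : Continuous fun s => igExponentDeriv a b 0 (θ * g s) := by fun_prop
    rw [intervalIntegral.integral_add intervalIntegrable_const (hint.intervalIntegrable _ _),
      intervalIntegral.integral_const]
  funext θ
  rw [hsplit, iteratedDeriv_const_add (Nat.pos_of_ne_zero hn),
    iteratedDeriv_integral_comp_mul (hasDerivAt_igExponentDeriv hb)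
      (fun k => ⟨_, norm_igExponentDeriv_le hb (Nat.le_add_left 1 k)⟩) hg]

end

theorem iteratedDeriv_IG_cumulant_integral_zero_general
    (a b lam t : ℝ) (hb : 0 < b)
    (n : ℕ) (hn : 2 ≤ n)
    (Ψ : ℝ → ℂ)
    (hΨ : ∀ x : ℝ, Ψ x = -(a : ℂ) * (((b : ℂ) ^ 2 - 2 * Complex.I * (x : ℂ)) ^ ((1 : ℂ)/2) - (b : ℂ))) :
    iteratedDeriv n
      (fun θ : ℝ => ∫ s in (0 : ℝ)..(lam * t), Ψ (θ * lam⁻¹ * (1 - Real.exp (-(lam * t) + s))))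
      0
    = (-1 : ℂ) ^ n * (∏ k ∈ Finset.Icc 2 n, (2 * (k : ℂ) - 3)) *
        ((a : ℂ) / ((Complex.I * (lam : ℂ)) ^ n * (b : ℂ) ^ (2 * n - 1))) *
        ((∑ k ∈ Finset.Icc 1 n, (n.choose k : ℂ) * (-1 : ℂ) ^ k *
            ((1 - Real.exp (-(k : ℝ) * lam * t) : ℝ) : ℂ) / (k : ℂ))
          + (lam : ℂ) * (t : ℂ)) := by
  set g : ℝ → ℝ := fun s => lam⁻¹ * (1 - Real.exp (s - lam * t)) with hg
  have hgpow : ∫ s in (0 : ℝ)..lam * t, (g s : ℂ) ^ n = (lam : ℂ)⁻¹ ^ n *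
      (∑ k ∈ Icc 1 n, (n.choose k : ℂ) * (-1) ^ k *
        ((1 - Real.exp (-(k : ℝ) * lam * t) : ℝ) : ℂ) / k + lam * t) := by
    simp_rw [← ofReal_pow, intervalIntegral.integral_ofReal, hg, mul_pow,
      intervalIntegral.integral_const_mul, integral_one_sub_exp_sub_pow, neg_mul, mul_assoc]
    push_cast
    ring
  have hdiv_I : (-1 : ℂ) / (I * lam) = I / lam := by
    rw [mul_comm, ← div_div, div_I]
    ring
  have hintegrand : (fun θ : ℝ => ∫ s in (0 : ℝ)..(lam * t),
      Ψ (θ * lam⁻¹ * (1 - Real.exp (-(lam * t) + s)))) =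
      fun θ => ∫ s in (0 : ℝ)..(lam * t), Ψ (θ * g s) := by
    simp_rw [hg, mul_assoc, neg_add_eq_sub]
  rw [hintegrand,
    iteratedDeriv_integral_IG_exponent_comp_mul hb.ne' hΨ (by fun_prop) _ _ (by omega : n ≠ 0)]
  simp only [zero_mul, intervalIntegral.integral_mul_const, hgpow,
    igExponentDeriv_apply_zero hb (by omega : 1 ≤ n)]
  generalize (∑ k ∈ Icc 1 n, _ : ℂ) = S
  generalize (∏ k ∈ Icc 2 n, _ : ℂ) = P
  calc _ = P * a / b ^ (2 * n - 1) * (I / lam) ^ n * (S + lam * t) := by ring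
    _ = _ := by rw [← hdiv_I]; ring

/-- For `n ≥ 2`, the `n`-th derivative at `θ = 0` of the cumulant integral
`I(θ) = ∫₀^{λt} Ψ(θλ⁻¹(1 - e^{-λt+s})) ds` equals
`(-1)ⁿ (∏_{k=2}^n (2k-3)) (a/((iλ)ⁿ b^{2n-1})) [∑_{k=1}^n C(n,k)(-1)^k (1-e^{-kλt})/k + λt]`. -/
theorem iteratedDeriv_IG_cumulant_integral_zero
    (a b lam t : ℝ) (ha : 0 < a) (hb : 0 < b) (hlam : 0 < lam) (ht : 0 < t)
    (n : ℕ) (hn : 2 ≤ n)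
    (Ψ : ℝ → ℂ)
    (hΨ : ∀ x : ℝ, Ψ x = -(a : ℂ) * (((b : ℂ) ^ 2 - 2 * Complex.I * (x : ℂ)) ^ ((1 : ℂ)/2) - (b : ℂ))) :
    iteratedDeriv n
      (fun θ : ℝ => ∫ s in (0 : ℝ)..(lam * t), Ψ (θ * lam⁻¹ * (1 - Real.exp (-(lam * t) + s))))
      0
    = (-1 : ℂ) ^ n * (∏ k ∈ Finset.Icc 2 n, (2 * (k : ℂ) - 3)) *
        ((a : ℂ) / ((Complex.I * (lam : ℂ)) ^ n * (b : ℂ) ^ (2 * n - 1))) *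
        ((∑ k ∈ Finset.Icc 1 n, (n.choose k : ℂ) * (-1 : ℂ) ^ k *
            ((1 - Real.exp (-(k : ℝ) * lam * t) : ℝ) : ℂ) / (k : ℂ))
          + (lam : ℂ) * (t : ℂ)) :=
  iteratedDeriv_IG_cumulant_integral_zero_general a b lam t hb n hn Ψ hΨ
end

section
/- Let A, B, v > 0 and let γ be the standard Gaussian measure N(0,1) on ℝ. Then ∫_ℝ max( A e^{√v z - v/2} - B , 0 ) dγ(z) = A Φ(d₁) - B Φ(d₂), where d₁ = ( log(A/B) + v/2 ) / √v, d₂ = d₁ - √v, and Φ is the cumulative distribution function of the standard Gaussian measure on ℝ. -/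
/-!
Above the point `-d₂` the payoff is `A e^{√v z - v/2} - B`, below it the payoff vanishes. Tilting
a Gaussian by `e^{t z}` shifts its mean by `t` times its variance, so the first term contributes
`A · N(√v, 1)[-d₂, ∞) = A Φ(√v + d₂) = A Φ(d₁)`, and by symmetry the second contributes
`B · N(0, 1)[-d₂, ∞) = B Φ(d₂)`.
-/

open MeasureTheory ProbabilityTheory Real Set
open scoped NNReal

namespace ProbabilityTheory

lemma gaussianPDFReal_mul_exp_mul (μ t : ℝ) (v : ℝ≥0) (x : ℝ) :
    gaussianPDFReal μ v x * exp (t * x - (μ * t + v * t ^ 2 / 2))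
      = gaussianPDFReal (μ + v * t) v x := by
  rcases eq_or_ne v 0 with rfl | hv
  · simp [gaussianPDFReal_zero_var]
  have hv' : (v : ℝ) ≠ 0 := by exact_mod_cast hv
  rw [gaussianPDFReal_def, gaussianPDFReal_def, mul_assoc, ← exp_add]
  congr 2
  field_simp
  ring

lemma gaussianReal_tilted_mul (μ t : ℝ) (v : ℝ≥0) :
    (gaussianReal μ v).tilted (t * ·) = gaussianReal (μ + v * t) v := by
  rcases eq_or_ne v 0 with rfl | hv
  · rw [gaussianReal_zero_var, NNReal.coe_zero, zero_mul, add_zero, gaussianReal_zero_var,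
      tilted_congr (ae_eq_dirac (t * ·))]
    exact tilted_const _ _
  have hmgf : ∫ x, exp (t * x) ∂gaussianReal μ v = exp (μ * t + v * t ^ 2 / 2) :=
    congrFun mgf_id_gaussianReal t
  rw [Measure.tilted, hmgf, gaussianReal_of_var_ne_zero _ hv, gaussianReal_of_var_ne_zero _ hv,
    ← withDensity_mul _ (measurable_gaussianPDF μ v) (by fun_prop)]
  congr 1
  ext x
  simp only [Pi.mul_apply, gaussianPDF, ← ENNReal.ofReal_mul (gaussianPDFReal_nonneg _ _ _),
    ← exp_sub, gaussianPDFReal_mul_exp_mul]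

lemma setIntegral_exp_mul_gaussianReal (μ t : ℝ) (v : ℝ≥0) {S : Set ℝ} (hS : MeasurableSet S) :
    ∫ x in S, exp (t * x - (μ * t + v * t ^ 2 / 2)) ∂gaussianReal μ v
      = (gaussianReal (μ + v * t) v).real S := by
  have hmgf : ∫ x, exp (t * x) ∂gaussianReal μ v = exp (μ * t + v * t ^ 2 / 2) :=
    congrFun mgf_id_gaussianReal t
  rw [← gaussianReal_tilted_mul, measureReal_def, tilted_apply_eq_ofReal_integral' _ hS, hmgf,
    ENNReal.toReal_ofReal (setIntegral_nonneg hS fun _ _ ↦ by positivity)]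
  simp only [exp_sub]

lemma measureReal_gaussianReal_Ici (μ x : ℝ) (v : ℝ≥0) :
    (gaussianReal μ v).real (Ici x) = (gaussianReal 0 v).real (Iic (μ - x)) := by
  have h := gaussianReal_map_const_sub (μ := 0) (v := v) μ
  rw [sub_zero] at h
  rw [← h, map_measureReal_apply (by fun_prop) measurableSet_Ici]
  congr 1
  ext z
  simp [le_sub_comm]

end ProbabilityTheory

lemma max_sub_zero_eq_indicator_Ici {α : Type*} [LinearOrder α] {f : α → ℝ} (hf : Monotone f)
    (k z : α) : max (f z - f k) 0 = (Ici k).indicator (fun z ↦ f z - f k) z := by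
  by_cases hz : z ∈ Ici k
  · rw [indicator_of_mem hz, max_eq_left (sub_nonneg.mpr (hf hz))]
  · rw [indicator_of_notMem hz, max_eq_right (sub_nonpos.mpr (hf (le_of_not_ge hz)))]

lemma integral_max_mul_exp_sub_gaussianReal {A s : ℝ} (hA : 0 ≤ A) (hs : 0 ≤ s) (k : ℝ) :
    ∫ z, max (A * exp (s * z - s ^ 2 / 2) - A * exp (s * k - s ^ 2 / 2)) 0 ∂gaussianReal 0 1
      = A * (gaussianReal 0 1).real (Iic (s - k))
        - A * exp (s * k - s ^ 2 / 2) * (gaussianReal 0 1).real (Iic (-k)) := by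
  have hf : Monotone fun z ↦ A * exp (s * z - s ^ 2 / 2) := fun x y hxy ↦ by dsimp only; gcongr
  have hint : Integrable (fun z ↦ A * exp (s * z - s ^ 2 / 2)) (gaussianReal 0 1) := by
    simpa only [← exp_sub, mul_div_assoc'] using
      ((integrable_exp_mul_gaussianReal s).div_const (exp (s ^ 2 / 2))).const_mul A
  have htilt : ∫ z in Ici k, exp (s * z - s ^ 2 / 2) ∂gaussianReal 0 1
      = (gaussianReal s 1).real (Ici k) := by
    simpa using setIntegral_exp_mul_gaussianReal 0 s 1 measurableSet_Ici
  simp_rw [max_sub_zero_eq_indicator_Ici hf k]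
  rw [integral_indicator measurableSet_Ici, integral_sub hint.integrableOn (integrable_const _),
    integral_const_mul, htilt, setIntegral_const, measureReal_gaussianReal_Ici,
    measureReal_gaussianReal_Ici, zero_sub, smul_eq_mul]
  ring

/-- Black–Scholes/Margrabe-type Gaussian integral: with `γ = N(0,1)`,
`∫ max(A e^{√v z - v/2} - B, 0) dγ(z) = A Φ(d₁) - B Φ(d₂)` where
`d₁ = (log(A/B) + v/2)/√v`, `d₂ = d₁ - √v`, and `Φ` is the standard Gaussian CDF. -/
theorem gaussian_integral_margrabe
    (A B v : ℝ) (hA : 0 < A) (hB : 0 < B) (hv : 0 < v)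
    (Φ : ℝ → ℝ) (hΦ : ∀ x, Φ x = ((gaussianReal 0 1) (Set.Iic x)).toReal)
    (d₁ d₂ : ℝ)
    (hd₁ : d₁ = (Real.log (A / B) + v / 2) / Real.sqrt v)
    (hd₂ : d₂ = d₁ - Real.sqrt v) :
    (∫ z, max (A * Real.exp (Real.sqrt v * z - v / 2) - B) 0 ∂(gaussianReal 0 1))
      = A * Φ d₁ - B * Φ d₂ := by
  have hv2 : v / 2 = √v ^ 2 / 2 := by rw [sq_sqrt hv.le]
  have hstrike : B = A * exp (√v * -d₂ - √v ^ 2 / 2) := by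
    have hs : √v ≠ 0 := (sqrt_pos.mpr hv).ne'
    have hlog : √v * -d₂ - √v ^ 2 / 2 = log (B / A) := by
      rw [hd₂, hd₁, log_div hB.ne' hA.ne', log_div hA.ne' hB.ne']
      field_simp
      rw [sq_sqrt hv.le]
      ring
    rw [hlog, exp_log (div_pos hB hA)]
    field_simp
  have hd₁' : √v - -d₂ = d₁ := by rw [hd₂]; ring
  rw [hv2, hstrike, integral_max_mul_exp_sub_gaussianReal hA.le (sqrt_nonneg v), hd₁', neg_neg,
    hΦ, hΦ]
  rfl
end
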